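/- Let X be a complex Banach space with a monotone basis, Ω ⊆ X open, and let 0 < γ ≤ β/4 with β < 1. Then for all positive integers n ≤ N, the norm closure of Ω_n⟨γ⟩ is contained in Ω_N⟨β⟩. -/

import Mathlib

open MeasureTheory
open scoped ENNReal

noncomputable section

/-- An open set `Ω` in a complex Banach space is pseudoconvex if `Ω` is the whole space or
`-log dist(·, Ωᶜ)` is plurisubharmonic on `Ω` (sub-mean-value inequality on analytic discs). -/
def IsPseudoconvex {X : Type*} [NormedAddCommGroup X] [NormedSpace ℂ X] (Ω : Set X) : Prop :=
  Ω = Set.univ ∨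
    ∀ a ∈ Ω, ∀ b : X,
      {y : X | ∃ μ : ℂ, ‖μ‖ ≤ 1 ∧ y = a + μ • b} ⊆ Ω →
      -Real.log (Metric.infDist a Ωᶜ) ≤
        (1 / (2 * Real.pi)) *
          ∫ θ in (0:ℝ)..(2 * Real.pi),
            -Real.log (Metric.infDist (a + Complex.exp (θ * Complex.I) • b) Ωᶜ)

/-- `e` is an unconditional basis: every vector has a unique coefficient family, with
unconditional (`HasSum`) convergence. -/
def IsUnconditionalBasis {X : Type*} [NormedAddCommGroup X] [Module ℂ X]
    {I : Type*} (e : I → X) : Prop :=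
  ∀ x : X, ∃! lam : I → ℂ, HasSum (fun i => lam i • e i) x

/-- The basis `e` has unconditional constant at most `c`. -/
def HasUnconditionalConst {X : Type*} [NormedAddCommGroup X] [Module ℂ X]
    {I : Type*} (e : I → X) (c : ℝ) : Prop :=
  ∀ (x : X) (lam : I → ℂ), HasSum (fun i => lam i • e i) x →
    ∀ θ : I → ℝ, (∀ i, θ i = 1 ∨ θ i = -1) →
      ∀ y : X, HasSum (fun i => ((θ i : ℂ) * lam i) • e i) y → ‖y‖ ≤ c * ‖x‖

/-- A 1-unconditional basis. -/
def IsOneUnconditionalBasis {X : Type*} [NormedAddCommGroup X] [Module ℂ X]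
    {I : Type*} (e : I → X) : Prop :=
  IsUnconditionalBasis e ∧ HasUnconditionalConst e 1

/-- A (Schauder) basis of `X` together with its coefficient functionals. -/
structure BasisData (X : Type*) [NormedAddCommGroup X] [Module ℂ X] where
  e : ℕ → X
  coeff : X → ℕ → ℂ
  hasSum : ∀ x, HasSum (fun n => coeff x n • e n) x
  unique : ∀ (x : X) (lam : ℕ → ℂ), HasSum (fun n => lam n • e n) x → lam = coeff x

/-- The canonical projection `π_N` associated with a basis. -/
def BasisData.proj {X : Type*} [NormedAddCommGroup X] [Module ℂ X]
    (b : BasisData X) (N : ℕ) (x : X) : X :=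
  ∑ n ∈ Finset.range N, b.coeff x n • b.e n

/-- A monotone basis: `‖π_N x‖ ≤ ‖x‖` for all `N` and `x`. -/
def BasisData.IsMonotone {X : Type*} [NormedAddCommGroup X] [Module ℂ X]
    (b : BasisData X) : Prop :=
  ∀ (N : ℕ) (x : X), ‖b.proj N x‖ ≤ ‖x‖

/-- `d(x) = min {1, dist(x, Ωᶜ)}`. -/
def dOmega {X : Type*} [NormedAddCommGroup X] (Ω : Set X) (x : X) : ℝ :=
  min 1 (Metric.infDist x Ωᶜ)

/-- The ball bundle `Ω_N⟨α⟩`. -/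
def OmegaN {X : Type*} [NormedAddCommGroup X] [Module ℂ X]
    (b : BasisData X) (Ω : Set X) (α : ℝ) (N : ℕ) : Set X :=
  {x | (‖b.proj N x‖ < α * N ∧ 1 < α * N * dOmega Ω (b.proj N x)) ∧
       ‖x - b.proj N x‖ < α * dOmega Ω (b.proj N x)}

/-- `V` is a separable `L^p` space: separable and linearly isometric to some `Lp ℂ p μ`. -/
def IsSeparableLp (p : ℝ≥0∞) (hp : 1 ≤ p)
    (V : Type*) [NormedAddCommGroup V] [NormedSpace ℂ V] : Prop :=
  TopologicalSpace.SeparableSpace V ∧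
    ∃ (S : Type) (_ : MeasurableSpace S) (μ : Measure S),
      letI : Fact (1 ≤ p) := ⟨hp⟩
      Nonempty (V ≃ₗᵢ[ℂ] Lp ℂ p μ)

/-- Open set of type B: `A(r)`. -/
def typeBOpen {X : Type*} [NormedAddCommGroup X] (π : X → X) (A : Set X) (r : X → ℝ) :
    Set X :=
  {x | π x ∈ A ∧ ‖x - π x‖ < r (π x)}

/-- Closed set of type B: `A[r]`. -/
def typeBClosed {X : Type*} [NormedAddCommGroup X] (π : X → X) (A : Set X) (r : X → ℝ) :
    Set X :=
  {x | π x ∈ A ∧ ‖x - π x‖ ≤ r (π x)}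

/-- Closed Hartogs set `{(s,μ) : s ∈ A, |μ| ≤ r s}`. -/
def hartogsClosed {X : Type*} [NormedAddCommGroup X] (A : Set X) (r : X → ℝ) :
    Set (X × ℂ) :=
  {z | z.1 ∈ A ∧ ‖z.2‖ ≤ r z.1}

/-- Open Hartogs set `{(s,μ) : s ∈ A, |μ| < r s}`. -/
def hartogsOpen {X : Type*} [NormedAddCommGroup X] (A : Set X) (r : X → ℝ) :
    Set (X × ℂ) :=
  {z | z.1 ∈ A ∧ ‖z.2‖ < r z.1}


section AuxLemmas

variable {X : Type*} [NormedAddCommGroup X] [NormedSpace ℂ X]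

lemma BasisData.coeff_sub' (b : BasisData X) (x y : X) :
    b.coeff (x - y) = fun i => b.coeff x i - b.coeff y i := by
  refine (b.unique (x - y) _ ?_).symm
  have := (b.hasSum x).sub (b.hasSum y)
  simpa [sub_smul] using this

lemma BasisData.proj_sub' (b : BasisData X) (N : ℕ) (x y : X) :
    b.proj N (x - y) = b.proj N x - b.proj N y := by
  simp [BasisData.proj, b.coeff_sub', sub_smul, Finset.sum_sub_distrib]

lemma BasisData.coeff_proj' (b : BasisData X) (n : ℕ) (x : X) :
    b.coeff (b.proj n x) = fun i => if i < n then b.coeff x i else 0 := by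
  refine (b.unique _ _ ?_).symm
  have h : ∀ i ∉ Finset.range n, (if i < n then b.coeff x i else 0) • b.e i = 0 := by
    intro i hi
    rw [if_neg (by simpa using hi), zero_smul]
  have hsum : (∑ i ∈ Finset.range n, (if i < n then b.coeff x i else 0) • b.e i)
      = b.proj n x := by
    refine Finset.sum_congr rfl fun i hi => ?_
    rw [if_pos (Finset.mem_range.mp hi)]
  exact hsum ▸ hasSum_sum_of_ne_finset_zero h

lemma BasisData.proj_proj' (b : BasisData X) {n N : ℕ} (h : n ≤ N) (x : X) :
    b.proj N (b.proj n x) = b.proj n x := by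
  rw [show b.proj N (b.proj n x)
      = ∑ i ∈ Finset.range N, b.coeff (b.proj n x) i • b.e i from rfl, b.coeff_proj']
  rw [← Finset.sum_subset (Finset.range_subset_range.mpr h)
      (fun i _ hi => by
        show (if i < n then b.coeff x i else 0) • b.e i = 0
        rw [if_neg (by simpa using hi), zero_smul])]
  exact Finset.sum_congr rfl fun i hi => by
    show (if i < n then b.coeff x i else 0) • b.e i = b.coeff x i • b.e i
    rw [if_pos (Finset.mem_range.mp hi)]

lemma dOmega_sub_le' (Ω : Set X) (u v : X) : dOmega Ω u ≤ dOmega Ω v + ‖u - v‖ := by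
  have h := Metric.infDist_le_infDist_add_dist (x := u) (y := v) (s := Ωᶜ)
  rw [dist_eq_norm] at h
  have h0 : (0:ℝ) ≤ ‖u - v‖ := norm_nonneg _
  unfold dOmega
  calc min 1 (Metric.infDist u Ωᶜ)
      ≤ min 1 (Metric.infDist v Ωᶜ + ‖u - v‖) := min_le_min le_rfl h
    _ ≤ min (1 + ‖u - v‖) (Metric.infDist v Ωᶜ + ‖u - v‖) :=
        min_le_min (by linarith) le_rfl
    _ = min 1 (Metric.infDist v Ωᶜ) + ‖u - v‖ := min_add_add_right 1 _ _

end AuxLemmas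

/-- For `n ≤ N` and `0 < γ ≤ β/4 < 1/4`, the closure of `Ω_n⟨γ⟩` is contained in `Ω_N⟨β⟩`. -/
theorem omegaN_closure_subset
    {X : Type*} [NormedAddCommGroup X] [NormedSpace ℂ X] [CompleteSpace X]
    (b : BasisData X) (hb : b.IsMonotone)
    (Ω : Set X) (hΩo : IsOpen Ω)
    (γ β : ℝ) (hγ0 : 0 < γ) (hγβ : γ ≤ β / 4) (hβ : β < 1)
    (n N : ℕ) (hn : 0 < n) (hN : 0 < N) (hnN : n ≤ N) :
    closure (OmegaN b Ω γ n) ⊆ OmegaN b Ω β N := by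
  intro x hx
  have hlip : ∀ (M : ℕ) (u v : X), ‖b.proj M u - b.proj M v‖ ≤ ‖u - v‖ := by
    intro M u v
    rw [← b.proj_sub']
    exact hb M (u - v)
  have hmem : ∀ ε > 0, ∃ y, ((‖b.proj n y‖ < γ * n ∧ 1 < γ * n * dOmega Ω (b.proj n y)) ∧
      ‖y - b.proj n y‖ < γ * dOmega Ω (b.proj n y)) ∧ ‖x - y‖ < ε := by
    intro ε hε
    rcases Metric.mem_closure_iff.mp hx ε hε with ⟨y, hy, hd⟩
    simp only [OmegaN, Set.mem_setOf_eq] at hy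
    exact ⟨y, hy, by rwa [dist_eq_norm] at hd⟩
  have hn1 : (1:ℝ) ≤ n := by exact_mod_cast hn
  have hN1 : (1:ℝ) ≤ N := by exact_mod_cast hN
  have hnN' : (n:ℝ) ≤ N := by exact_mod_cast hnN
  have hβ0 : 0 < β := by linarith
  have hγ4 : γ < 1/4 := by linarith
  have hγn : 0 < γ * n := mul_pos hγ0 (by linarith)
  -- limit inequalities
  have h1 : ‖b.proj n x‖ ≤ γ * n := by
    refine le_of_forall_pos_le_add fun ε hε => ?_
    obtain ⟨y, ⟨⟨hy1, hy2⟩, hy3⟩, hxy⟩ := hmem ε hε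
    have hl := hlip n x y
    have ht := norm_sub_norm_le (b.proj n x) (b.proj n y)
    linarith
  have h2 : 1 ≤ γ * n * dOmega Ω (b.proj n x) := by
    refine le_of_forall_pos_le_add fun ε hε => ?_
    obtain ⟨y, ⟨⟨hy1, hy2⟩, hy3⟩, hxy⟩ := hmem (ε / (γ * n)) (by positivity)
    have hl : ‖b.proj n y - b.proj n x‖ < ε / (γ * n) :=
      lt_of_le_of_lt (hlip n y x) (by rwa [norm_sub_rev] at hxy)
    have h6 : dOmega Ω (b.proj n y) ≤ dOmega Ω (b.proj n x) + ε / (γ * n) := by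
      have := dOmega_sub_le' Ω (b.proj n y) (b.proj n x)
      linarith
    have h7 := mul_le_mul_of_nonneg_left h6 hγn.le
    rw [mul_add] at h7
    have heq : γ * n * (ε / (γ * n)) = ε := by field_simp
    rw [heq] at h7
    linarith
  have h3 : ‖x - b.proj n x‖ ≤ γ * dOmega Ω (b.proj n x) := by
    refine le_of_forall_pos_le_add fun ε hε => ?_
    have h2γ : (0:ℝ) < 2 + γ := by linarith
    obtain ⟨y, ⟨⟨hy1, hy2⟩, hy3⟩, hxy⟩ := hmem (ε / (2 + γ)) (by positivity)
    have hl : ‖b.proj n y - b.proj n x‖ ≤ ‖x - y‖ :=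
      (hlip n y x).trans (le_of_eq (norm_sub_rev _ _))
    have hdle : dOmega Ω (b.proj n y) ≤ dOmega Ω (b.proj n x) + ‖x - y‖ := by
      have := dOmega_sub_le' Ω (b.proj n y) (b.proj n x)
      linarith
    have t1 : ‖x - b.proj n x‖ ≤ ‖x - y‖ + ‖y - b.proj n x‖ := by
      have h : x - b.proj n x = (x - y) + (y - b.proj n x) := by abel
      rw [h]; exact norm_add_le _ _
    have t2 : ‖y - b.proj n x‖ ≤ ‖y - b.proj n y‖ + ‖b.proj n y - b.proj n x‖ := by
      have h : y - b.proj n x = (y - b.proj n y) + (b.proj n y - b.proj n x) := by abel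
      rw [h]; exact norm_add_le _ _
    have h7 := mul_le_mul_of_nonneg_left hdle hγ0.le
    rw [mul_add] at h7
    have hxyE : (2 + γ) * ‖x - y‖ < ε := by
      calc (2 + γ) * ‖x - y‖ < (2 + γ) * (ε / (2 + γ)) := by
            exact mul_lt_mul_of_pos_left hxy h2γ
        _ = ε := by field_simp
    linarith [h7, t1, t2, hl, hy3, hdle, hxyE]
  have hd1 : dOmega Ω (b.proj n x) ≤ 1 := min_le_left _ _
  have hd0 : 0 < dOmega Ω (b.proj n x) := by
    by_contra h
    push_neg at h
    have := mul_nonpos_of_nonneg_of_nonpos hγn.le h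
    linarith
  have hdist : ‖b.proj N x - b.proj n x‖ ≤ γ * dOmega Ω (b.proj n x) := by
    have heq : b.proj N x - b.proj n x = b.proj N (x - b.proj n x) := by
      rw [b.proj_sub', b.proj_proj' hnN]
    rw [heq]
    exact le_trans (hb N _) h3
  have hdN : (1 - γ) * dOmega Ω (b.proj n x) ≤ dOmega Ω (b.proj N x) := by
    have h := dOmega_sub_le' Ω (b.proj n x) (b.proj N x)
    rw [norm_sub_rev] at h
    linarith [h, hdist]
  have hdN0 : 0 ≤ dOmega Ω (b.proj N x) :=
    le_trans (mul_nonneg (by linarith) hd0.le) hdN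
  refine ⟨⟨?_, ?_⟩, ?_⟩
  · -- ‖π_N x‖ < β N
    have ht : ‖b.proj N x‖ ≤ ‖b.proj n x‖ + ‖b.proj N x - b.proj n x‖ := by
      have := norm_sub_norm_le (b.proj N x) (b.proj n x)
      linarith
    have hA : γ * n ≤ β / 4 * N := mul_le_mul hγβ hnN' (by linarith) (by linarith)
    have hB : β / 4 ≤ β / 4 * N := le_mul_of_one_le_right (by linarith) hN1
    have hC : γ * dOmega Ω (b.proj n x) ≤ γ := mul_le_of_le_one_right hγ0.le hd1
    have hD : 0 < β / 2 * N := by positivity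
    linarith [ht, h1, hdist, hA, hB, hC, hD]
  · -- 1 < β N d(π_N x)
    have hA : 4 * γ * n ≤ β * N :=
      mul_le_mul (by linarith) hnN' (by linarith) (by linarith)
    have p1 := mul_le_mul_of_nonneg_right hA hdN0
    have p2 := mul_le_mul_of_nonneg_left hdN
      (show (0:ℝ) ≤ 4 * γ * n by positivity)
    have p3 := mul_le_mul_of_nonneg_left h2 (show (0:ℝ) ≤ 4 * (1 - γ) by linarith)
    linarith [p1, p2, p3, hγ4]
  · -- ‖x - π_N x‖ < β d(π_N x)
    have q1 : ‖x - b.proj N x‖ ≤ ‖x - b.proj n x‖ + ‖b.proj N x - b.proj n x‖ := by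
      have h : x - b.proj N x = (x - b.proj n x) - (b.proj N x - b.proj n x) := by abel
      rw [h]; exact norm_sub_le _ _
    have c1 : ‖x - b.proj N x‖ ≤ 2 * γ * dOmega Ω (b.proj n x) := by linarith
    have c2 := mul_le_mul_of_nonneg_left hdN hβ0.le
    have c3 : 2 * γ < β * (1 - γ) := by
      have hb1 := mul_le_mul_of_nonneg_right (show 4 * γ ≤ β by linarith)
        (show (0:ℝ) ≤ 1 - γ by linarith)
      have hsq : γ * γ < γ * (1/4) := mul_lt_mul_of_pos_left hγ4 hγ0
      linarith [hb1, hsq]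
    have c4 := mul_lt_mul_of_pos_right c3 hd0
    linarith

end
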